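/- arXiv:2603.25983 — 2 statements merged into one kernel-verified Lean document; each statement's English description precedes it below -/
import Mathlib

section
/- Let α ∈ ℝ^{m_k} minimize ‖r(q(x_k)) + Σ_{i=1}^{m_k} α_i (r(q(x_k)) − r(q(x_{k−i})))‖ over all α ∈ ℝ^{m_k} (the AAr least-squares problem), define x_{k+1} = q(x_k) + Σ_{i=1}^{m_k} α_i (q(x_k) − q(x_{k−i})) and r_{k+1} = r(x_{k+1}). Then: (1) ⟨r_{k+1}, B (r_{k−j} − r_{k−i})⟩ = 0 for all indices 0 ≤ i, j ≤ m_k; (2) ‖r_{k+1}‖ ≤ ‖B r_k‖; and (3) if moreover ‖B‖ < 1 in the operator 2-norm and r_k ≠ 0, then ‖r_{k+1}‖ < ‖r_k‖, where B = I − P A. -/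
/-!
The residual `r` is affine with linear part `P A`, and `r ∘ q = B ∘ r`. Hence `r_{k+1}` is
exactly the vector minimised in the least-squares problem, and each direction
`r (q x_k) - r (q x_{k-i}) = B (r_k - r_{k-i})` is orthogonal to it by first-order optimality;
`B (r_{k-j} - r_{k-i})` is the difference of two such directions. Comparing with `α = 0` gives
`‖r_{k+1}‖ ≤ ‖B r_k‖ ≤ ‖B‖ ‖r_k‖`.
-/

open scoped RealInnerProductSpace

/-- Matrix-vector multiplication on Euclidean space. -/
noncomputable def mulV {n : ℕ} (M : Matrix (Fin n) (Fin n) ℝ)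
    (v : EuclideanSpace ℝ (Fin n)) : EuclideanSpace ℝ (Fin n) :=
  Matrix.toEuclideanLin M v

open scoped Matrix.Norms.L2Operator

section LeastSquares

variable {E : Type*} [NormedAddCommGroup E] [InnerProductSpace ℝ E]

/-- `t ↦ ‖u + t • w‖²` is a quadratic in `t` minimised at `0`, so its linear coefficient
`2 ⟪u, w⟫` vanishes: the discriminant `4 ⟪u, w⟫²` is nonpositive. -/
theorem real_inner_eq_zero_of_forall_norm_le_norm_add_smul {u w : E}
    (h : ∀ t : ℝ, ‖u‖ ≤ ‖u + t • w‖) : ⟪u, w⟫ = 0 := by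
  have hquad : ∀ t : ℝ, 0 ≤ ‖w‖ ^ 2 * (t * t) + 2 * ⟪u, w⟫ * t + 0 := by
    intro t
    have hsq := pow_le_pow_left₀ (norm_nonneg _) (h t) 2
    rw [norm_add_sq_real, real_inner_smul_right, norm_smul, mul_pow, Real.norm_eq_abs,
      sq_abs] at hsq
    linarith
  have hdisc := discrim_le_zero hquad
  rw [discrim] at hdisc
  nlinarith [sq_nonneg ⟪u, w⟫]

theorem real_inner_add_sum_smul_eq_zero_of_forall_norm_le {ι : Type*} (s : Finset ι) (v : E)
    (w : ι → E) (α : ι → ℝ)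
    (hmin : ∀ a : ι → ℝ, ‖v + ∑ j ∈ s, α j • w j‖ ≤ ‖v + ∑ j ∈ s, a j • w j‖)
    {i : ι} (hi : i ∈ s) : ⟪v + ∑ j ∈ s, α j • w j, w i⟫ = 0 := by
  classical
  refine real_inner_eq_zero_of_forall_norm_le_norm_add_smul fun t => ?_
  simpa [add_smul, Finset.sum_add_distrib, ite_smul, hi, add_assoc] using
    hmin fun j => α j + if j = i then t else 0

end LeastSquares

theorem apply_add_sum_smul_sub {R M N ι : Type*} [Ring R] [AddCommGroup M] [Module R M]
    [AddCommGroup N] [Module R N] {f : M → N} (L : M →ₗ[R] N)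
    (hf : ∀ u v, f u - f v = L (u - v)) (s : Finset ι) (c : ι → R) (u : M) (v : ι → M) :
    f (u + ∑ i ∈ s, c i • (u - v i)) = f u + ∑ i ∈ s, c i • (f u - f (v i)) := by
  rw [← sub_eq_iff_eq_add', hf, add_sub_cancel_left, map_sum]
  simp only [map_smul, hf]

section Richardson

variable {n : ℕ} {A P : Matrix (Fin n) (Fin n) ℝ} {b : EuclideanSpace ℝ (Fin n)}
  {q r : EuclideanSpace ℝ (Fin n) → EuclideanSpace ℝ (Fin n)}

theorem residual_sub (hq : ∀ y, q y = y + mulV P (b - mulV A y)) (hr : ∀ y, r y = y - q y)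
    (u v : EuclideanSpace ℝ (Fin n)) : r u - r v = mulV (P * A) (u - v) := by
  simp only [hr, hq, mulV, Matrix.toLpLin_mul_same, LinearMap.comp_apply, map_sub]
  abel

theorem residual_richardson (hq : ∀ y, q y = y + mulV P (b - mulV A y))
    (hr : ∀ y, r y = y - q y) (y : EuclideanSpace ℝ (Fin n)) :
    r (q y) = mulV (1 - P * A) (r y) := by
  have hstep := residual_sub hq hr (q y) y
  rw [← neg_sub y, ← hr, mulV, map_neg] at hstep
  simp only [mulV, map_sub, Matrix.toLpLin_one, LinearMap.sub_apply, LinearMap.id_apply]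
  linear_combination (norm := module) hstep

end Richardson

theorem norm_mulV_lt_of_norm_lt_one {n : ℕ} {M : Matrix (Fin n) (Fin n) ℝ}
    {v : EuclideanSpace ℝ (Fin n)} (hM : ‖M‖ < 1) (hv : v ≠ 0) : ‖mulV M v‖ < ‖v‖ :=
  calc ‖mulV M v‖ ≤ ‖M‖ * ‖v‖ := M.l2_opNorm_mulVec v
    _ < ‖v‖ := mul_lt_of_lt_one_left (norm_pos_iff.mpr hv) hM

theorem stmt_15_general {n : ℕ} (A P : Matrix (Fin n) (Fin n) ℝ)
    (b : EuclideanSpace ℝ (Fin n))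
    (q r : EuclideanSpace ℝ (Fin n) → EuclideanSpace ℝ (Fin n))
    (hq : ∀ y, q y = y + mulV P (b - mulV A y))
    (hr : ∀ y, r y = y - q y)
    (B : Matrix (Fin n) (Fin n) ℝ) (hB : B = 1 - P * A)
    (k m : ℕ)
    (x : ℕ → EuclideanSpace ℝ (Fin n))
    (α : ℕ → ℝ)
    (hopt : ∀ a : ℕ → ℝ,
      ‖r (q (x k)) + ∑ i ∈ Finset.Icc 1 m, α i • (r (q (x k)) - r (q (x (k - i))))‖ ≤
      ‖r (q (x k)) + ∑ i ∈ Finset.Icc 1 m, a i • (r (q (x k)) - r (q (x (k - i))))‖)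
    (xk1 rk1 : EuclideanSpace ℝ (Fin n))
    (hx : xk1 = q (x k) + ∑ i ∈ Finset.Icc 1 m, α i • (q (x k) - q (x (k - i))))
    (hrk1 : rk1 = r xk1) :
    (∀ i j, i ≤ m → j ≤ m → ⟪rk1, mulV B (r (x (k - j)) - r (x (k - i)))⟫ = 0) ∧
    ‖rk1‖ ≤ ‖mulV B (r (x k))‖ ∧
    (‖B‖ < 1 → r (x k) ≠ 0 → ‖rk1‖ < ‖r (x k)‖) := by
  subst hB hrk1 hx
  set w : ℕ → EuclideanSpace ℝ (Fin n) := fun i => r (q (x k)) - r (q (x (k - i))) with hw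
  have hrk1 : r (q (x k) + ∑ i ∈ Finset.Icc 1 m, α i • (q (x k) - q (x (k - i)))) =
      r (q (x k)) + ∑ i ∈ Finset.Icc 1 m, α i • w i :=
    apply_add_sum_smul_sub _ (residual_sub hq hr) _ _ _ _
  have horth : ∀ i ≤ m, ⟪r (q (x k)) + ∑ j ∈ Finset.Icc 1 m, α j • w j, w i⟫ = 0 := by
    intro i hi
    rcases Nat.eq_zero_or_pos i with rfl | hi0
    · simp [hw]
    · exact real_inner_add_sum_smul_eq_zero_of_forall_norm_le _ _ _ _ hopt
        (Finset.mem_Icc.mpr ⟨hi0, hi⟩)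
  have hnorm :
      ‖r (q (x k)) + ∑ i ∈ Finset.Icc 1 m, α i • w i‖ ≤ ‖mulV (1 - P * A) (r (x k))‖ := by
    simpa [← residual_richardson hq hr] using hopt 0
  rw [hrk1]
  refine ⟨fun i j hi hj => ?_, hnorm,
    fun hB hne => hnorm.trans_lt (norm_mulV_lt_of_norm_lt_one hB hne)⟩
  have hBw : mulV (1 - P * A) (r (x (k - j)) - r (x (k - i))) = w i - w j := by
    rw [mulV, map_sub, ← mulV, ← mulV, ← residual_richardson hq hr,
      ← residual_richardson hq hr, sub_sub_sub_cancel_left]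
  rw [hBw, inner_sub_right, horth i hi, horth j hj, sub_zero]

/-- orthogonality, norm bound and strict decrease for the AAr residual. -/
theorem stmt_15 {n : ℕ} (A P : Matrix (Fin n) (Fin n) ℝ)
    (hA : IsUnit A.det) (hP : IsUnit P.det)
    (b : EuclideanSpace ℝ (Fin n))
    (q r : EuclideanSpace ℝ (Fin n) → EuclideanSpace ℝ (Fin n))
    (hq : ∀ y, q y = y + mulV P (b - mulV A y))
    (hr : ∀ y, r y = y - q y)
    (B : Matrix (Fin n) (Fin n) ℝ) (hB : B = 1 - P * A)
    (k m : ℕ) (hm : m ≤ k)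
    (x : ℕ → EuclideanSpace ℝ (Fin n))
    (α : ℕ → ℝ)
    (hopt : ∀ a : ℕ → ℝ,
      ‖r (q (x k)) + ∑ i ∈ Finset.Icc 1 m, α i • (r (q (x k)) - r (q (x (k - i))))‖ ≤
      ‖r (q (x k)) + ∑ i ∈ Finset.Icc 1 m, a i • (r (q (x k)) - r (q (x (k - i))))‖)
    (xk1 rk1 : EuclideanSpace ℝ (Fin n))
    (hx : xk1 = q (x k) + ∑ i ∈ Finset.Icc 1 m, α i • (q (x k) - q (x (k - i))))
    (hrk1 : rk1 = r xk1) :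
    (∀ i j, i ≤ m → j ≤ m → ⟪rk1, mulV B (r (x (k - j)) - r (x (k - i)))⟫ = 0) ∧
    ‖rk1‖ ≤ ‖mulV B (r (x k))‖ ∧
    (‖B‖ < 1 → r (x k) ≠ 0 → ‖rk1‖ < ‖r (x k)‖) :=
  stmt_15_general A P b q r hq hr B hB k m x α hopt xk1 rk1 hx hrk1
end

section
/- For every coefficient vector β ∈ ℝ^{m_k+1}, the NGMRES update x_{k+1} = q(x_k) + Σ_{i=0}^{m_k} β_i (q(x_k) − x_{k−i}) applied to the preconditioned Richardson iteration satisfies both: (1) r(q(x_k)) + Σ_{i=0}^{m_k} β_i (r(q(x_k)) − r(x_{k−i})) = r(x_{k+1}) (so the NGMRESr least-squares objective vector equals the preconditioned residual of the update), and (2) r(x_{k+1}) = B r_k − Σ_{i=0}^{m_k} β_i (r_{k−i} − B r_k), where r_j = r(x_j) and B = I − P A. -/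
open scoped RealInnerProductSpace

lemma mulV_sub' {n : ℕ} (M : Matrix (Fin n) (Fin n) ℝ) (v w : EuclideanSpace ℝ (Fin n)) :
    mulV M (v - w) = mulV M v - mulV M w := by simp [mulV]

lemma mulV_add' {n : ℕ} (M : Matrix (Fin n) (Fin n) ℝ) (v w : EuclideanSpace ℝ (Fin n)) :
    mulV M (v + w) = mulV M v + mulV M w := by simp [mulV]

lemma mulV_smul' {n : ℕ} (M : Matrix (Fin n) (Fin n) ℝ) (c : ℝ) (v : EuclideanSpace ℝ (Fin n)) :
    mulV M (c • v) = c • mulV M v := by simp [mulV]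

lemma mulV_sum' {n : ℕ} (M : Matrix (Fin n) (Fin n) ℝ) (s : Finset ℕ)
    (f : ℕ → EuclideanSpace ℝ (Fin n)) :
    mulV M (∑ i ∈ s, f i) = ∑ i ∈ s, mulV M (f i) := by simp [mulV]

lemma mulV_mul' {n : ℕ} (M N : Matrix (Fin n) (Fin n) ℝ) (v : EuclideanSpace ℝ (Fin n)) :
    mulV (M * N) v = mulV M (mulV N v) := by
  simp [mulV, Matrix.toEuclideanLin_apply, Matrix.mulVec_mulVec]

lemma mulV_matSub' {n : ℕ} (M N : Matrix (Fin n) (Fin n) ℝ) (v : EuclideanSpace ℝ (Fin n)) :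
    mulV (M - N) v = mulV M v - mulV N v := by simp [mulV]

lemma mulV_one' {n : ℕ} (v : EuclideanSpace ℝ (Fin n)) : mulV 1 v = v := by
  simp [mulV, Matrix.toEuclideanLin_apply]

/-- NGMRESr least-squares objective equals the preconditioned residual of the
NGMRES update. -/
theorem stmt_16 {n : ℕ} (A P : Matrix (Fin n) (Fin n) ℝ)
    (hA : IsUnit A.det) (hP : IsUnit P.det)
    (b : EuclideanSpace ℝ (Fin n))
    (q r : EuclideanSpace ℝ (Fin n) → EuclideanSpace ℝ (Fin n))
    (hq : ∀ y, q y = y + mulV P (b - mulV A y))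
    (hr : ∀ y, r y = y - q y)
    (B : Matrix (Fin n) (Fin n) ℝ) (hB : B = 1 - P * A)
    (k m : ℕ) (hm : m ≤ k)
    (x : ℕ → EuclideanSpace ℝ (Fin n))
    (β : ℕ → ℝ)
    (xk1 : EuclideanSpace ℝ (Fin n))
    (hx : xk1 = q (x k) + ∑ i ∈ Finset.range (m + 1), β i • (q (x k) - x (k - i))) :
    r (q (x k)) + ∑ i ∈ Finset.range (m + 1), β i • (r (q (x k)) - r (x (k - i))) = r xk1 ∧
    r xk1 = mulV B (r (x k)) -
      ∑ i ∈ Finset.range (m + 1), β i • (r (x (k - i)) - mulV B (r (x k))) := by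
  have hrL : ∀ y, r y = mulV (P * A) y - mulV P b := by
    intro y
    rw [hr, hq, mulV_sub', mulV_mul']
    abel
  have hq' : ∀ y, q y = y - r y := by intro y; rw [hr]; abel
  have hBr : ∀ y, r (q y) = mulV B (r y) := by
    intro y
    rw [hrL (q y), hq' y, mulV_sub', hB, mulV_matSub', mulV_one']
    rw [hrL y]
    abel
  have h1 : r (q (x k)) + ∑ i ∈ Finset.range (m + 1), β i • (r (q (x k)) - r (x (k - i)))
      = r xk1 := by
    rw [hx]
    simp only [hrL, mulV_add', mulV_sum', mulV_smul', mulV_sub', sub_sub_sub_cancel_right]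
    abel
  refine ⟨h1, ?_⟩
  rw [← h1, hBr]
  simp only [smul_sub]
  rw [Finset.sum_sub_distrib, Finset.sum_sub_distrib]
  abel
end
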